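/- Let G be a connected graph of order n ≥ 2 and v ∈ V(G) such that G \ v contains at least one edge. Then dem(G) - dem(G \ v) ≤ n - 2, with equality if and only if G = K_3. -/

import Mathlib

open SimpleGraph

variable {V : Type*}

/-- Edge `e` is monitored by vertex `x` in `G`: some distance from `x` changes
when `e` is removed. -/
def monitors (G : SimpleGraph V) (x : V) (e : Sym2 V) : Prop :=
  ∃ y : V, G.edist x y ≠ (G.deleteEdges {e}).edist x y

/-- `M` is a distance-edge-monitoring set of `G`. -/
def IsDEMSet (G : SimpleGraph V) (M : Set V) : Prop :=
  ∀ e ∈ G.edgeSet, ∃ x ∈ M, monitors G x e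

/-- The distance-edge-monitoring number of `G`. -/
noncomputable def dem (G : SimpleGraph V) : ℕ :=
  sInf {n | ∃ M : Set V, M.ncard = n ∧ IsDEMSet G M}

/-!
Every vertex cover of `G` monitors all edges, since an endpoint of an edge sees its distance to
the other endpoint jump from `1` when the edge is removed. As the complement of an independent
set is a vertex cover, `dem G ≤ n - 1`, with `dem G ≤ n - 2` unless `G` is complete; and an edge
of `G \ v` forces `1 ≤ dem (G \ v)`. Hence the difference is at most `n - 2`, and equality needs
`G = K_n` and `dem (K_{n-1}) = 1`. Finally `dem K_n = n - 1`: in a complete graph a vertex only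
monitors the edges at it, because all its other distances stay `1`.
-/

lemma monitors_of_adj {G : SimpleGraph V} {a b : V} (h : G.Adj a b) :
    monitors G a s(a, b) := by
  refine ⟨b, fun hab => ?_⟩
  rw [edist_eq_one_iff_adj.mpr h, eq_comm, edist_eq_one_iff_adj, deleteEdges_adj] at hab
  exact hab.2 rfl

lemma monitors_of_mem {G : SimpleGraph V} {x : V} {e : Sym2 V} (he : e ∈ G.edgeSet)
    (hx : x ∈ e) : monitors G x e := by
  obtain ⟨y, rfl⟩ := Sym2.mem_iff_exists.mp hx
  exact monitors_of_adj he

lemma not_monitors_top_of_notMem {x : V} {e : Sym2 V} (hx : x ∉ e) :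
    ¬ monitors ⊤ x e := by
  rintro ⟨y, hy⟩
  rcases eq_or_ne x y with rfl | hxy
  · simp at hy
  · have hadj : ((⊤ : SimpleGraph V).deleteEdges {e}).Adj x y := by
      rw [deleteEdges_adj]
      exact ⟨hxy, fun hxy_e => hx (hxy_e ▸ Sym2.mem_mk_left x y)⟩
    rw [edist_eq_one_iff_adj.mpr hadj, edist_eq_one_iff_adj.mpr hxy] at hy
    exact hy rfl

lemma SimpleGraph.IsVertexCover.isDEMSet {G : SimpleGraph V} {M : Set V}
    (hM : G.IsVertexCover M) : IsDEMSet G M := by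
  rintro ⟨a, b⟩ hab
  rcases hM hab with ha | hb
  · exact ⟨a, ha, monitors_of_mem hab (Sym2.mem_mk_left a b)⟩
  · exact ⟨b, hb, monitors_of_mem hab (Sym2.mem_mk_right a b)⟩

lemma dem_le_ncard {G : SimpleGraph V} {M : Set V} (hM : IsDEMSet G M) : dem G ≤ M.ncard :=
  Nat.sInf_le ⟨M, rfl, hM⟩

lemma exists_isDEMSet_ncard_eq_dem (G : SimpleGraph V) :
    ∃ M : Set V, M.ncard = dem G ∧ IsDEMSet G M :=
  Nat.sInf_mem (s := {n | ∃ M : Set V, M.ncard = n ∧ IsDEMSet G M})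
    ⟨_, Set.univ, rfl, isVertexCover_univ.isDEMSet⟩

lemma dem_pos [Finite V] {G : SimpleGraph V} (h : G.edgeSet.Nonempty) : 0 < dem G := by
  obtain ⟨M, hM, hMdem⟩ := exists_isDEMSet_ncard_eq_dem G
  obtain ⟨e, he⟩ := h
  obtain ⟨x, hx, -⟩ := hMdem e he
  rw [← hM]
  exact (Set.ncard_pos).mpr ⟨x, hx⟩

lemma dem_le_card_sub_ncard_of_isIndepSet [Fintype V] {G : SimpleGraph V} {s : Set V}
    (hs : G.IsIndepSet s) : dem G ≤ Fintype.card V - s.ncard := by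
  have hcompl := Set.ncard_add_ncard_compl s
  rw [Nat.card_eq_fintype_card] at hcompl
  have := dem_le_ncard (isVertexCover_compl.mpr hs).isDEMSet
  omega

lemma dem_le_card_sub_one [Fintype V] (G : SimpleGraph V) : dem G ≤ Fintype.card V - 1 := by
  cases isEmpty_or_nonempty V with
  | inl _ => simpa using dem_le_card_sub_ncard_of_isIndepSet (G := G) (Set.pairwise_empty _)
  | inr h =>
    obtain ⟨v⟩ := h
    simpa using dem_le_card_sub_ncard_of_isIndepSet (G := G) (Set.pairwise_singleton v _)

lemma eq_top_of_card_sub_one_le_dem [Fintype V] {G : SimpleGraph V}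
    (h : Fintype.card V - 1 ≤ dem G) : G = ⊤ := by
  by_contra hG
  obtain ⟨x, y, hxy, hnadj⟩ : ∃ x y : V, x ≠ y ∧ ¬ G.Adj x y := by
    contrapose! hG
    exact eq_top_iff.mpr fun x y hxy => hG x y hxy
  have hindep : G.IsIndepSet {x, y} :=
    Set.pairwise_pair.mpr fun _ => ⟨hnadj, fun h => hnadj h.symm⟩
  have hle := dem_le_card_sub_ncard_of_isIndepSet hindep
  have htwo : 2 ≤ Fintype.card V := Fintype.one_lt_card_iff.mpr ⟨x, y, hxy⟩
  rw [Set.ncard_pair hxy] at hle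
  omega

lemma dem_top [Fintype V] : dem (⊤ : SimpleGraph V) = Fintype.card V - 1 := by
  refine le_antisymm (dem_le_card_sub_one ⊤) ?_
  obtain ⟨M, hM, hMdem⟩ := exists_isDEMSet_ncard_eq_dem (⊤ : SimpleGraph V)
  by_contra! hlt
  have hcompl := Set.ncard_add_ncard_compl M
  rw [Nat.card_eq_fintype_card] at hcompl
  obtain ⟨a, b, ha, hb, hab⟩ := (Set.one_lt_ncard_iff (Set.toFinite Mᶜ)).mp (by omega)
  obtain ⟨x, hxM, hx⟩ := hMdem s(a, b) hab
  refine not_monitors_top_of_notMem (fun hxab => ?_) hx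
  rcases Sym2.mem_iff.mp hxab with rfl | rfl
  exacts [ha hxM, hb hxM]

lemma induce_top_eq_top (s : Set V) : (⊤ : SimpleGraph V).induce s = ⊤ :=
  induce_eq_top.mpr fun _ _ _ _ hne => hne

theorem stmt14_general [Fintype V] (G : SimpleGraph V) (v : V)
    (he : (SimpleGraph.induce {w | w ≠ v} G).edgeSet.Nonempty) :
    dem G - dem (SimpleGraph.induce {w | w ≠ v} G) ≤ Fintype.card V - 2 ∧
    (dem G - dem (SimpleGraph.induce {w | w ≠ v} G) = Fintype.card V - 2 ↔
      Fintype.card V = 3 ∧ G = ⊤) := by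
  classical
  have hcard : Fintype.card {w | w ≠ v} = Fintype.card V - 1 := Set.card_ne_eq v
  have hGle := dem_le_card_sub_one G
  have hG'pos := dem_pos he
  have hG'le := dem_le_card_sub_one (G.induce {w | w ≠ v})
  refine ⟨by omega, fun hdiff => ?_, ?_⟩
  · have hG : G = ⊤ := eq_top_of_card_sub_one_le_dem (by omega)
    have hG' : dem (G.induce {w | w ≠ v}) = Fintype.card V - 2 := by
      rw [hG, induce_top_eq_top, dem_top, hcard]
      omega
    exact ⟨by omega, hG⟩
  · rintro ⟨hn, rfl⟩
    rw [induce_top_eq_top, dem_top, dem_top, hcard, hn]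

theorem stmt14 [Fintype V] [DecidableEq V] (G : SimpleGraph V) (hG : G.Connected)
    (hn : 2 ≤ Fintype.card V) (v : V)
    (he : (SimpleGraph.induce {w | w ≠ v} G).edgeSet.Nonempty) :
    dem G - dem (SimpleGraph.induce {w | w ≠ v} G) ≤ Fintype.card V - 2 ∧
    (dem G - dem (SimpleGraph.induce {w | w ≠ v} G) = Fintype.card V - 2 ↔
      Fintype.card V = 3 ∧ G = ⊤) :=
  stmt14_general G v he
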